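/- For a weighted Laplacian L of a connected graph, there exists a unique symmetric positive semidefinite real matrix X such that X·L = I − 1·e₁ᵀ and X·e₁ = 0, where e₁ is the first standard basis vector and 1 is the all-ones vector. -/

import Mathlib

/-!
Ground node `0`: with `P` the matrix deleting coordinate `0`, the grounded Laplacian
`L₀ = P L Pᵀ` is positive definite, because the only constant vector vanishing at `0` is zero.
The solution is `X = Pᵀ L₀⁻¹ P`. Since `L 1 = 0`, the target `J = I − 1 e₁ᵀ` satisfies `L J = L`,
and `J` has zero first row, so `PᵀP J = J`; hence `X L = Pᵀ L₀⁻¹ (P L Pᵀ) P J = PᵀP J = J`.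
For uniqueness, every row `r` of the difference of two solutions satisfies `L r = 0` by symmetry
of `L`, so `r` is constant, and its first entry is `0`.
-/

open Matrix
open scoped ComplexOrder

namespace Matrix

section Uniqueness

variable {ι R : Type*} [Fintype ι] [DecidableEq ι] [CommRing R]

theorem eq_of_mul_eq_mul_of_mulVec_single_eq {L X Y : Matrix ι ι R} (hL : L.IsSymm)
    (hker : ∀ v, L *ᵥ v = 0 → ∃ c : R, v = fun _ => c) {i₀ : ι}
    (hmul : X * L = Y * L) (hcol : X *ᵥ Pi.single i₀ 1 = Y *ᵥ Pi.single i₀ 1) : X = Y := by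
  rw [← sub_eq_zero]
  ext i j
  have hrow : L *ᵥ (X - Y) i = 0 := by
    rw [← hL.eq, mulVec_transpose, ← mul_apply_eq_vecMul, sub_mul, hmul, sub_self]
    rfl
  obtain ⟨c, hc⟩ := hker _ hrow
  have hc0 : c = 0 := by
    have h := congrFun (sub_eq_zero.mpr hcol) i
    rw [← sub_mulVec, mulVec_single_one] at h
    rw [← congrFun hc i₀]
    exact h
  simpa [hc0] using congrFun hc j

end Uniqueness

theorem PosSemidef.posDef_conjTranspose_mul_mul_same {𝕜 m n : Type*} [RCLike 𝕜] [Fintype m]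
    [Fintype n] {A : Matrix n n 𝕜} (hA : A.PosSemidef) {B : Matrix n m 𝕜}
    (hB : ∀ x, A *ᵥ (B *ᵥ x) = 0 → x = 0) : (Bᴴ * A * B).PosDef := by
  refine .of_dotProduct_mulVec_pos (isHermitian_conjTranspose_mul_mul _ hA.1) fun x hx => ?_
  have hquad : star x ⬝ᵥ (Bᴴ * A * B) *ᵥ x = star (B *ᵥ x) ⬝ᵥ A *ᵥ (B *ᵥ x) := by
    simp only [star_mulVec, dotProduct_mulVec, vecMul_vecMul, ← mulVec_mulVec]
  rw [hquad]
  refine (hA.dotProduct_mulVec_nonneg _).lt_of_ne fun h => hx (hB x ?_)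
  exact (hA.dotProduct_mulVec_zero_iff _).mp h.symm

section Grounding

variable {R : Type*} {n : ℕ}

def finTail (R : Type*) [Zero R] [One R] (n : ℕ) : Matrix (Fin n) (Fin (n + 1)) R :=
  of fun i j => if i.succ = j then 1 else 0

section Semiring

variable [Semiring R]

@[simp]
theorem finTail_mulVec (v : Fin (n + 1) → R) : finTail R n *ᵥ v = Fin.tail v := by
  ext i
  simp [finTail, mulVec, dotProduct, Fin.tail]

@[simp]
theorem transpose_finTail_mulVec (x : Fin n → R) : (finTail R n)ᵀ *ᵥ x = Fin.cons 0 x := by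
  ext i
  cases i using Fin.cases <;> simp [finTail, mulVec, dotProduct, Fin.succ_ne_zero]

theorem transpose_finTail_mul_finTail_mul {m : Type*} (A : Matrix (Fin (n + 1)) m R)
    (hA : A 0 = 0) : (finTail R n)ᵀ * (finTail R n * A) = A := by
  ext i j
  cases i using Fin.cases
  · simp [mul_apply, finTail, hA, Fin.succ_ne_zero]
  · simp [mul_apply, finTail]

end Semiring

def grounded [Semiring R] (L : Matrix (Fin (n + 1)) (Fin (n + 1)) R) : Matrix (Fin n) (Fin n) R :=
  finTail R n * L * (finTail R n)ᵀ

noncomputable def groundedInv [CommRing R] (L : Matrix (Fin (n + 1)) (Fin (n + 1)) R) :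
    Matrix (Fin (n + 1)) (Fin (n + 1)) R :=
  (finTail R n)ᵀ * (grounded L)⁻¹ * finTail R n

section CommRing

variable [CommRing R] {L : Matrix (Fin (n + 1)) (Fin (n + 1)) R}

theorem groundedInv_mulVec_single_zero : groundedInv L *ᵥ Pi.single 0 1 = 0 := by
  have h : Fin.tail (Pi.single 0 1 : Fin (n + 1) → R) = 0 := by
    ext i
    simp [Fin.tail, Fin.succ_ne_zero]
  rw [groundedInv, ← mulVec_mulVec, finTail_mulVec, h, mulVec_zero]

theorem groundedInv_mul (hL : L *ᵥ (fun _ => 1) = 0) (hdet : IsUnit (grounded L).det) :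
    groundedInv L * L = 1 - of (fun _ j => if j = (0 : Fin (n + 1)) then (1 : R) else 0) := by
  set J : Matrix (Fin (n + 1)) (Fin (n + 1)) R :=
    1 - of (fun _ j => if j = (0 : Fin (n + 1)) then (1 : R) else 0)
  have hLJ : L * J = L := by
    have hE : of (fun (_ : Fin (n + 1)) j => if j = (0 : Fin (n + 1)) then (1 : R) else 0) =
        vecMulVec (fun _ => 1) (Pi.single 0 1) := by
      ext i j
      simp [vecMulVec_apply, Pi.single_apply]
    rw [mul_sub, mul_one, hE, mul_vecMulVec, hL, zero_vecMulVec, sub_zero]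
  have hJ0 : J 0 = 0 := by
    ext j
    simp [J, one_apply, eq_comm]
  set P := finTail R n
  calc groundedInv L * L = Pᵀ * (grounded L)⁻¹ * P * (L * (Pᵀ * (P * J))) := by
        rw [transpose_finTail_mul_finTail_mul J hJ0, hLJ, groundedInv]
    _ = Pᵀ * ((grounded L)⁻¹ * grounded L) * (P * J) := by
        simp only [grounded, P, Matrix.mul_assoc]
    _ = J := by
        rw [nonsing_inv_mul _ hdet, Matrix.mul_one, transpose_finTail_mul_finTail_mul J hJ0]

theorem posSemidef_groundedInv [PartialOrder R] [StarRing R] [TrivialStar R]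
    (hL : L.PosSemidef) : (groundedInv L).PosSemidef := by
  have h := (hL.mul_mul_conjTranspose_same (finTail R n)).inv.conjTranspose_mul_mul_same
    (finTail R n)
  simpa only [groundedInv, grounded, conjTranspose_eq_transpose_of_trivial] using h

end CommRing

theorem posDef_grounded {L : Matrix (Fin (n + 1)) (Fin (n + 1)) ℝ} (hL : L.PosSemidef)
    (hker : ∀ v, L *ᵥ v = 0 → ∃ c : ℝ, v = fun _ => c) : (grounded L).PosDef := by
  have h := hL.posDef_conjTranspose_mul_mul_same (B := (finTail ℝ n)ᵀ) fun x hx => by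
    rw [transpose_finTail_mulVec] at hx
    obtain ⟨c, hc⟩ := hker _ hx
    have hc0 : c = 0 := by simpa using (congrFun hc 0).symm
    ext i
    simpa [hc0] using congrFun hc i.succ
  simpa only [grounded, conjTranspose_eq_transpose_of_trivial, transpose_transpose] using h

end Grounding

end Matrix

theorem stmt_2_general {n : ℕ} (L : Matrix (Fin (n+1)) (Fin (n+1)) ℝ)
    (hpsd : L.PosSemidef)
    (hker : ∀ v : Fin (n+1) → ℝ, L.mulVec v = 0 ↔ ∃ c : ℝ, v = fun _ => c) :
    ∃! X : Matrix (Fin (n+1)) (Fin (n+1)) ℝ,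
      X.IsSymm ∧ X.PosSemidef ∧
      X * L = 1 - Matrix.of (fun _ j => if j = (0 : Fin (n+1)) then (1:ℝ) else 0) ∧
      X.mulVec (Pi.single 0 1) = 0 := by
  have hker' : ∀ v, L *ᵥ v = 0 → ∃ c : ℝ, v = fun _ => c := fun v => (hker v).mp
  have hdet : IsUnit (grounded L).det := (posDef_grounded hpsd hker').det_pos.ne'.isUnit
  have hXL := groundedInv_mul ((hker _).mpr ⟨1, rfl⟩) hdet
  have hXpsd := posSemidef_groundedInv hpsd
  refine ⟨groundedInv L, ⟨isHermitian_iff_isSymm.mp hXpsd.isHermitian, hXpsd, hXL,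
    groundedInv_mulVec_single_zero⟩, ?_⟩
  rintro Y ⟨-, -, hYL, hYe⟩
  exact eq_of_mul_eq_mul_of_mulVec_single_eq (isHermitian_iff_isSymm.mp hpsd.isHermitian) hker'
    (hYL.trans hXL.symm) (hYe.trans groundedInv_mulVec_single_zero.symm)

/-- for a weighted Laplacian `L` of a connected graph (symmetric,
positive semidefinite, kernel spanned by the all-ones vector), there is a unique
symmetric positive semidefinite matrix `X` with `X·L = I − 1·e₁ᵀ` and `X·e₁ = 0`. -/
theorem stmt_2 {n : ℕ} (L : Matrix (Fin (n+1)) (Fin (n+1)) ℝ)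
    (hsym : L.IsSymm) (hpsd : L.PosSemidef)
    (hker : ∀ v : Fin (n+1) → ℝ, L.mulVec v = 0 ↔ ∃ c : ℝ, v = fun _ => c) :
    ∃! X : Matrix (Fin (n+1)) (Fin (n+1)) ℝ,
      X.IsSymm ∧ X.PosSemidef ∧
      X * L = 1 - Matrix.of (fun _ j => if j = (0 : Fin (n+1)) then (1:ℝ) else 0) ∧
      X.mulVec (Pi.single 0 1) = 0 :=
  stmt_2_general L hpsd hker
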